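/- arXiv:2303.07979 — 2 statements merged into one kernel-verified Lean document; each statement's English description precedes it below -/
import Mathlib

section
/- For X ⊆ {1,...,n}, the R-span J_X of all diagrams in which, among the right-hand nodes labelled by elements of X, there is at least one singleton block or one pair of nodes in the same block, is a left ideal of P_n(R,δ). -/
/-! Core definitions for the partition algebra `P_n(R, δ)`. -/

attribute [local instance] Classical.propDecidable

/-- Nodes of a partition diagram: `Sum.inl i` is the left node `-(i+1)`,
`Sum.inr i` is the right node `i+1`. -/
abbrev PNode (n : ℕ) := Sum (Fin n) (Fin n)

/-- A diagram is a set partition (equivalence relation) of the `2n` nodes. -/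
abbrev PDiagram (n : ℕ) := Setoid (PNode n)

/-- Three copies of the nodes: left, middle, right; used to concatenate diagrams. -/
abbrev TNode (n : ℕ) := Sum (Fin n) (Sum (Fin n) (Fin n))

def inLM (n : ℕ) : PNode n → TNode n :=
  Sum.elim Sum.inl (fun i => Sum.inr (Sum.inl i))

def inMR (n : ℕ) : PNode n → TNode n :=
  Sum.elim (fun i => Sum.inr (Sum.inl i)) (fun i => Sum.inr (Sum.inr i))

def inOuter (n : ℕ) : PNode n → TNode n :=
  Sum.elim Sum.inl (fun i => Sum.inr (Sum.inr i))

/-- The partition of the three-fold node set generated by placing diagram `a`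
on the (left, middle) nodes and diagram `b` on the (middle, right) nodes. -/
def joinSetoid (n : ℕ) (a b : PDiagram n) : Setoid (TNode n) :=
  Relation.EqvGen.setoid (fun x y =>
    (∃ u v, a.r u v ∧ x = inLM n u ∧ y = inLM n v) ∨
    (∃ u v, b.r u v ∧ x = inMR n u ∧ y = inMR n v))

def isMiddle (n : ℕ) : TNode n → Prop := fun x => ∃ i : Fin n, x = Sum.inr (Sum.inl i)

/-- The concatenation of two diagrams: the induced partition on the outer nodes. -/
def compDiagram (n : ℕ) (a b : PDiagram n) : PDiagram n :=
  Setoid.comap (inOuter n) (joinSetoid n a b)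

/-- The number of blocks of the concatenation contained entirely in the middle nodes. -/
noncomputable def middleCount (n : ℕ) (a b : PDiagram n) : ℕ :=
  Nat.card {c : Quotient (joinSetoid n a b) //
    ∀ x : TNode n, Quotient.mk (joinSetoid n a b) x = c → isMiddle n x}

/-- The partition algebra: the free `R`-module on the set of diagrams. -/
def PAlg (n : ℕ) (R : Type) [CommRing R] (_δ : R) : Type := PDiagram n →₀ R

variable (n : ℕ) (R : Type) [CommRing R] (δ : R)

noncomputable instance : AddCommGroup (PAlg n R δ) := inferInstanceAs (AddCommGroup (PDiagram n →₀ R))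
noncomputable instance : Module R (PAlg n R δ) := inferInstanceAs (Module R (PDiagram n →₀ R))

/-- The basis element of the partition algebra given by a diagram. -/
noncomputable def PAdiag (d : PDiagram n) : PAlg n R δ := Finsupp.single d 1

/-- Multiplication of the partition algebra: concatenate diagrams and multiply by
`δ^k` where `k` is the number of blocks contained in the middle nodes. -/
noncomputable def PAmul (x y : PAlg n R δ) : PAlg n R δ :=
  Finsupp.sum (x : PDiagram n →₀ R) fun a r =>
    Finsupp.sum (y : PDiagram n →₀ R) fun b s =>
      (Finsupp.single (compDiagram n a b) (r * s * δ ^ middleCount n a b) : PDiagram n →₀ R)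

/-- The identity diagram, with blocks `{-i, i}` for `1 ≤ i ≤ n`. -/
def idDiagram (n : ℕ) : PDiagram n := Setoid.ker (Sum.elim id id)

/-- The unit of the partition algebra. -/
noncomputable def PAone : PAlg n R δ := Finsupp.single (idDiagram n) 1

/-- The permutation diagram of `σ`, with blocks `{-i, σ(i)}`. -/
def permDiagram (σ : Equiv.Perm (Fin n)) : PDiagram n := Setoid.ker (Sum.elim (⇑σ) id)

/-- The right node `i` is a singleton block of `d`. -/
def singletonAt (d : PDiagram n) (i : Fin n) : Prop :=
  ∀ v : PNode n, d.r (Sum.inr i) v → v = Sum.inr i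

/-- `J_X`: the `R`-span of all diagrams in which, among the right-hand nodes labelled
by elements of `X`, there is at least one singleton block or one pair of nodes in the
same block. -/
noncomputable def JXSpan (X : Finset (Fin n)) : Submodule R (PAlg n R δ) :=
  Submodule.span R {f | ∃ d : PDiagram n,
    ((∃ i ∈ X, singletonAt n d i) ∨
      (∃ i ∈ X, ∃ j ∈ X, i ≠ j ∧ d.r (Sum.inr i) (Sum.inr j))) ∧
    f = PAdiag n R δ d}

/-!
`J_X` consists of the elements supported on diagrams with a defect on `X` (a singleton right
node, or two right nodes in one block). Every diagram in the support of `a * d` is a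
concatenation `c ∘ d`, and gluing `c` to the left of `d` only adds connections through the
middle nodes: blocks of right nodes of `d` stay joined, and a singleton right node of `d`
touches no middle node, so it stays a singleton.
-/

section LeftIdeal

variable {n R δ}

def HasRightDefect (X : Finset (Fin n)) (d : PDiagram n) : Prop :=
  (∃ i ∈ X, singletonAt n d i) ∨ (∃ i ∈ X, ∃ j ∈ X, i ≠ j ∧ d.r (Sum.inr i) (Sum.inr j))

theorem inMR_eq_right_iff {u : PNode n} {i : Fin n} :
    inMR n u = Sum.inr (Sum.inr i) ↔ u = Sum.inr i := by
  cases u <;> simp [inMR]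

theorem inLM_ne_right (u : PNode n) (i : Fin n) : inLM n u ≠ Sum.inr (Sum.inr i) := by
  cases u <;> simp [inLM]

theorem singletonAt.eq_iff_of_rel {d : PDiagram n} {i : Fin n} (h : singletonAt n d i)
    {u w : PNode n} (huw : d.r u w) : u = Sum.inr i ↔ w = Sum.inr i := by
  constructor
  · rintro rfl
    exact h w huw
  · rintro rfl
    exact h u (d.symm huw)

theorem singletonAt.joinSetoid_rel_iff {a b : PDiagram n} {i : Fin n} (h : singletonAt n b i)
    {x y : TNode n} (hxy : (joinSetoid n a b).r x y) :
    x = Sum.inr (Sum.inr i) ↔ y = Sum.inr (Sum.inr i) := by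
  induction hxy with
  | rel x y hr =>
    rcases hr with ⟨u, w, -, rfl, rfl⟩ | ⟨u, w, huw, rfl, rfl⟩
    · exact iff_of_false (inLM_ne_right u i) (inLM_ne_right w i)
    · rw [inMR_eq_right_iff, inMR_eq_right_iff]
      exact h.eq_iff_of_rel huw
  | refl => exact Iff.rfl
  | symm _ _ _ ih => exact ih.symm
  | trans _ _ _ _ _ ih₁ ih₂ => exact ih₁.trans ih₂

theorem singletonAt.compDiagram {b : PDiagram n} {i : Fin n} (h : singletonAt n b i)
    (a : PDiagram n) : singletonAt n (compDiagram n a b) i := by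
  intro v hv
  have hv' := (h.joinSetoid_rel_iff (a := a) hv).mp rfl
  cases v <;> simp_all [inOuter]

theorem compDiagram_rel_inr_of_rel (a : PDiagram n) {b : PDiagram n} {i j : Fin n}
    (h : b.r (Sum.inr i) (Sum.inr j)) : (compDiagram n a b).r (Sum.inr i) (Sum.inr j) :=
  Relation.EqvGen.rel _ _ (Or.inr ⟨Sum.inr i, Sum.inr j, h, rfl, rfl⟩)

theorem HasRightDefect.compDiagram {X : Finset (Fin n)} {b : PDiagram n}
    (h : HasRightDefect X b) (a : PDiagram n) : HasRightDefect X (compDiagram n a b) := by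
  rcases h with ⟨i, hi, hsing⟩ | ⟨i, hi, j, hj, hij, hrel⟩
  · exact Or.inl ⟨i, hi, hsing.compDiagram a⟩
  · exact Or.inr ⟨i, hi, j, hj, hij, compDiagram_rel_inr_of_rel a hrel⟩

theorem mem_JXSpan_iff {X : Finset (Fin n)} {f : PAlg n R δ} :
    f ∈ JXSpan n R δ X ↔ ∀ d ∈ (f : PDiagram n →₀ R).support, HasRightDefect X d := by
  have hspan : JXSpan n R δ X = Finsupp.supported R R {d | HasRightDefect X d} := by
    rw [Finsupp.supported_eq_span_single, JXSpan]
    congr 1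
    ext f
    exact ⟨fun ⟨d, hd, hf⟩ => ⟨d, hd, hf.symm⟩, fun ⟨d, hd, hf⟩ => ⟨d, hd, hf.symm⟩⟩
  rw [hspan]
  exact Iff.rfl

theorem support_PAmul_subset (x y : PAlg n R δ) :
    (PAmul n R δ x y : PDiagram n →₀ R).support ⊆
      Finset.image₂ (compDiagram n) (x : PDiagram n →₀ R).support (y : PDiagram n →₀ R).support := by
  intro d hd
  obtain ⟨a, ha, hd⟩ := Finset.mem_biUnion.mp (Finsupp.support_sum hd)
  obtain ⟨b, hb, hd⟩ := Finset.mem_biUnion.mp (Finsupp.support_sum hd)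
  rw [Finset.mem_singleton.mp (Finsupp.support_single_subset hd)]
  exact Finset.mem_image₂_of_mem ha hb

end LeftIdeal

/-- `J_X` is a left ideal of the partition algebra. -/
theorem JXSpan_left_ideal (X : Finset (Fin n)) :
    ∀ a f : PAlg n R δ, f ∈ JXSpan n R δ X → PAmul n R δ a f ∈ JXSpan n R δ X := by
  intro a f hf
  rw [mem_JXSpan_iff] at hf ⊢
  intro d hd
  obtain ⟨c, -, b, hb, rfl⟩ := Finset.mem_image₂.mp (support_PAmul_subset a f hd)
  exact (hf b hb).compDiagram c
end

section
/- Let X be a finite set and s ≥ 0. The complex of injective words with s separators W_X^{(s)} — concentrated in degrees −1 ≤ p ≤ |X|−1, with degree-p basis the words of length s+p+1 in the alphabet X ⊔ {|} containing each letter of X at most once and exactly s separators |, and boundary the signed sum over deletions of non-separator letters (signs by position among all letters) — satisfies ∂^{p-1} ∘ ∂^p = 0, and its homology vanishes in degrees i ≤ |X| − 2. -/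
/-! The complex of injective words with separators. -/

variable (X : Type) [Fintype X] [DecidableEq X] (R : Type) [CommRing R] (s : ℕ)

/-- An injective word on `X` with `s` separators and `k` letters from `X`:
a word in the alphabet `X ⊔ {|}` (`none` is the separator `|`) in which each letter
from `X` appears at most once and the separator exactly `s` times; its length is
`s + k` and its homological degree is `k - 1`. -/
def IsSepWord (k : ℕ) (w : List (Option X)) : Prop :=
  (w.filterMap id).Nodup ∧ w.count none = s ∧ w.length = s + k

instance (k : ℕ) : DecidablePred (IsSepWord X s k) := fun w => by
  unfold IsSepWord; infer_instance

/-- The degree `k - 1` chain group of the complex of injective words with `s`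
separators: the free `R`-module on the injective words with `s` separators and `k`
letters from `X`. -/
abbrev SepWords (k : ℕ) : Type := {w : List (Option X) // IsSepWord X s k w} →₀ R

/-- The boundary operator: the signed sum over deletions of the non-separator
letters, with the sign determined by the position of the deleted letter among all
letters (separators are never deleted). -/
noncomputable def sepBnd (k : ℕ) : SepWords X R s (k + 1) →ₗ[R] SepWords X R s k :=
  Finsupp.lift (SepWords X R s k) R {w : List (Option X) // IsSepWord X s (k + 1) w}
    (fun w => ∑ i ∈ Finset.range w.1.length,
      if h : IsSepWord X s k (w.1.eraseIdx i)
      then Finsupp.single ⟨w.1.eraseIdx i, h⟩ ((-1 : R) ^ i)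
      else 0)

/-!
Prepending a letter `x` is a contracting homotopy on words that do not contain `x`:
there `∂ h_x + h_x ∂ = id`. So the chain map `id - (∂ h_x + h_x ∂)`, which is homotopic
to the identity, carries every chain to a chain of words containing `x`, without losing
the letters already present. Doing this for every letter of `X` moves any cycle, modulo
boundaries, to a cycle of words containing all of `X`; with at most `|X| - 1` letters per
word there are none. That `∂ ∂ = 0` is the usual cancellation between deleting positions
`i < j` in the two possible orders.
-/

namespace List

theorem eraseIdx_eraseIdx_succ_of_le {α : Type*} (l : List α) {i j : ℕ} (h : i ≤ j) :
    (l.eraseIdx (j + 1)).eraseIdx i = (l.eraseIdx i).eraseIdx j := by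
  induction l generalizing i j with
  | nil => simp
  | cons a l ih =>
    cases i with
    | zero => simp
    | succ i =>
      cases j with
      | zero => omega
      | succ j => simp only [eraseIdx_cons_succ, ih (Nat.le_of_succ_le_succ h)]

theorem getElem_eq_of_mem_of_not_mem_eraseIdx {α : Type*} {l : List α} {a : α} {i : ℕ}
    (hi : i < l.length) (ha : a ∈ l) (ha' : a ∉ l.eraseIdx i) : l[i] = a := by
  obtain ⟨j, hj, rfl⟩ := getElem_of_mem ha
  by_contra hij
  exact ha' (mem_eraseIdx_iff_getElem.mpr ⟨j, hj, fun h => hij (by simp [h]), rfl⟩)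

theorem length_filterMap_id_add_count_none {α : Type*} [DecidableEq α] (l : List (Option α)) :
    (l.filterMap id).length + l.count none = l.length := by
  induction l with
  | nil => rfl
  | cons a l ih => cases a <;> simp [← ih] <;> omega

end List

section

variable {X : Type} [DecidableEq X] {R : Type} [CommRing R] {s : ℕ}

theorem IsSepWord.length_filterMap {k : ℕ} {w : List (Option X)} (hw : IsSepWord X s k w) :
    (w.filterMap id).length = k := by
  have := w.length_filterMap_id_add_count_none
  rw [hw.2.1, hw.2.2] at this
  omega

theorem IsSepWord.pos_of_some_mem {k : ℕ} {w : List (Option X)} (hw : IsSepWord X s k w)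
    {x : X} (hx : some x ∈ w) : 0 < k :=
  hw.length_filterMap ▸ List.length_pos_of_mem (List.mem_filterMap.mpr ⟨_, hx, rfl⟩)

theorem isSepWord_cons_some_iff {k : ℕ} {x : X} {u : List (Option X)} :
    IsSepWord X s (k + 1) (some x :: u) ↔ IsSepWord X s k u ∧ some x ∉ u := by
  simp only [IsSepWord, List.filterMap_cons, id_eq, List.nodup_cons, List.mem_filterMap,
    exists_eq_right, List.count_cons, List.length_cons, beq_iff_eq, reduceCtorEq, if_false,
    add_zero, Nat.add_right_cancel_iff, ← add_assoc]
  tauto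

theorem isSepWord_eraseIdx_iff {k : ℕ} {w : List (Option X)} (hw : IsSepWord X s (k + 1) w)
    {i : ℕ} (hi : i < w.length) : IsSepWord X s k (w.eraseIdx i) ↔ w[i] ≠ none := by
  obtain ⟨hw₁, rfl, hw₃⟩ := hw
  have hcount := (List.getElem_cons_eraseIdx_perm hi).count_eq none
  have hlen := List.length_eraseIdx_add_one hi
  have hnodup := ((List.eraseIdx_sublist w i).filterMap id).nodup hw₁
  rw [List.count_cons] at hcount
  unfold IsSepWord
  by_cases hnone : w[i] = none
  · simp only [hnone, BEq.rfl, if_true, ne_eq, not_true_eq_false, iff_false] at hcount ⊢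
    omega
  · simp only [hnone, beq_iff_eq, if_false, add_zero, ne_eq, not_false_eq_true,
      iff_true] at hcount ⊢
    exact ⟨hnodup, hcount, by omega⟩

theorem not_isSepWord_eraseIdx_eraseIdx_of_getElem_eq_none {n k : ℕ} {w : List (Option X)}
    (hw : IsSepWord X s n w) {j : ℕ} (hj : j < w.length) (hj' : w[j] = none) (i : ℕ) :
    ¬ IsSepWord X s k ((w.eraseIdx j).eraseIdx i) := by
  have hcount := (List.getElem_cons_eraseIdx_perm hj).count_eq none
  have hle := (List.eraseIdx_sublist (w.eraseIdx j) i).count_le none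
  rw [List.count_cons, hj', hw.2.1] at hcount
  simp only [BEq.rfl, if_true] at hcount
  intro h
  have := h.2.1
  omega

/-- `r` times the basis vector `w`, or `0` when `w` is not an injective word with `s` separators
and `k` letters. -/
noncomputable def sepSingle (k : ℕ) (w : List (Option X)) (r : R) : SepWords X R s k :=
  if h : IsSepWord X s k w then Finsupp.single ⟨w, h⟩ r else 0

theorem sepSingle_of_isSepWord {k : ℕ} {w : List (Option X)} (h : IsSepWord X s k w) (r : R) :
    sepSingle k w r = Finsupp.single ⟨w, h⟩ r :=
  dif_pos h

theorem sepSingle_of_not_isSepWord {k : ℕ} {w : List (Option X)} (h : ¬ IsSepWord X s k w)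
    (r : R) : (sepSingle k w r : SepWords X R s k) = 0 :=
  dif_neg h

theorem sepSingle_add (k : ℕ) (w : List (Option X)) (a b : R) :
    (sepSingle k w a + sepSingle k w b : SepWords X R s k) = sepSingle k w (a + b) := by
  unfold sepSingle
  split_ifs <;> simp

theorem sepSingle_zero (k : ℕ) (w : List (Option X)) :
    (sepSingle k w 0 : SepWords X R s k) = 0 := by
  unfold sepSingle
  split_ifs <;> simp

theorem sepSingle_neg (k : ℕ) (w : List (Option X)) (a : R) :
    (sepSingle k w (-a) : SepWords X R s k) = -sepSingle k w a := by
  unfold sepSingle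
  split_ifs <;> simp

theorem smul_sepSingle (k : ℕ) (w : List (Option X)) (a b : R) :
    (a • sepSingle k w b : SepWords X R s k) = sepSingle k w (a * b) := by
  unfold sepSingle
  split_ifs <;> simp

theorem sepSingle_mem_supported {k : ℕ} {w : List (Option X)} (r : R)
    {p : {u : List (Option X) // IsSepWord X s k u} → Prop} (hp : ∀ h, p ⟨w, h⟩) :
    (sepSingle k w r : SepWords X R s k) ∈ Finsupp.supported R R {u | p u} := by
  unfold sepSingle
  split_ifs with h
  · exact Finsupp.single_mem_supported R r (hp h)
  · exact zero_mem _

theorem sepBnd_single (k : ℕ) (w : {w : List (Option X) // IsSepWord X s (k + 1) w}) (r : R) :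
    sepBnd X R s k (Finsupp.single w r) =
      ∑ i ∈ Finset.range w.1.length, sepSingle k (w.1.eraseIdx i) ((-1) ^ i * r) := by
  rw [sepBnd, Finsupp.lift_apply, Finsupp.sum_single_index (by simp), Finset.smul_sum]
  refine Finset.sum_congr rfl fun i _ => ?_
  rw [← sepSingle, smul_sepSingle, mul_comm]

theorem sepBnd_sepSingle_eraseIdx {k : ℕ} {w : List (Option X)} (hw : IsSepWord X s (k + 2) w)
    {j : ℕ} (hj : j < w.length) (r : R) :
    sepBnd X R s k (sepSingle (k + 1) (w.eraseIdx j) r) = ∑ i ∈ Finset.range (s + k + 1),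
      sepSingle k ((w.eraseIdx j).eraseIdx i) ((-1) ^ i * r) := by
  by_cases hj' : w[j] = none
  · rw [sepSingle_of_not_isSepWord (by rwa [isSepWord_eraseIdx_iff hw hj, not_not]), map_zero]
    exact (Finset.sum_eq_zero fun i _ => sepSingle_of_not_isSepWord
      (not_isSepWord_eraseIdx_eraseIdx_of_getElem_eq_none hw hj hj' i) _).symm
  · have h := (isSepWord_eraseIdx_iff hw hj).mpr hj'
    rw [sepSingle_of_isSepWord h, sepBnd_single, h.2.2, add_assoc]

theorem sepSingle_eraseIdx_eraseIdx_add_eq_zero (k : ℕ) (w : List (Option X)) (r : R) {i j : ℕ}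
    (hij : i < j) :
    (sepSingle k ((w.eraseIdx j).eraseIdx i) ((-1) ^ i * ((-1) ^ j * r)) +
      sepSingle k ((w.eraseIdx i).eraseIdx (j - 1)) ((-1) ^ (j - 1) * ((-1) ^ i * r)) :
      SepWords X R s k) = 0 := by
  obtain ⟨j, rfl⟩ := Nat.exists_eq_add_of_lt hij
  rw [Nat.add_sub_cancel, List.eraseIdx_eraseIdx_succ_of_le w (by omega), sepSingle_add,
    ← sepSingle_zero k ((w.eraseIdx i).eraseIdx (i + j))]
  congr 1
  ring

theorem sepBnd_comp_sepBnd (k : ℕ) : (sepBnd X R s k).comp (sepBnd X R s (k + 1)) = 0 := by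
  refine Finsupp.lhom_ext fun w r => ?_
  have hlen : w.1.length = s + k + 2 := by rw [w.2.2.2]; ring
  rw [LinearMap.comp_apply, sepBnd_single, map_sum, LinearMap.zero_apply,
    Finset.sum_congr rfl fun j hj =>
      sepBnd_sepSingle_eraseIdx w.2 (Finset.mem_range.mp hj) ((-1) ^ j * r),
    hlen, ← Finset.sum_product']
  -- `(j, i)` and `(i, j - 1)` for `i < j` both delete the positions `i` and `j` of `w`
  refine Finset.sum_involution
    (fun p _ => if p.2 < p.1 then (p.2, p.1 - 1) else (p.2 + 1, p.1)) ?_ ?_ ?_ ?_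
  · rintro ⟨j, i⟩ -
    dsimp only
    split_ifs with hij
    · exact sepSingle_eraseIdx_eraseIdx_add_eq_zero k w.1 r hij
    · simpa [add_comm] using sepSingle_eraseIdx_eraseIdx_add_eq_zero k w.1 r
        (Nat.lt_succ_of_le (not_lt.mp hij))
  · rintro ⟨j, i⟩ - -
    dsimp only
    split_ifs with hij <;> simp only [ne_eq, Prod.mk.injEq] <;> omega
  · rintro ⟨j, i⟩ hp
    simp only [Finset.mem_product, Finset.mem_range] at hp
    dsimp only
    split_ifs <;> simp only [Finset.mem_product, Finset.mem_range] <;> omega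
  · rintro ⟨j, i⟩ -
    by_cases hij : i < j
    · simp only [hij, if_true, show ¬ j - 1 < i by omega, if_false, Prod.mk.injEq, and_true]
      omega
    · simp [hij, show j < i + 1 by omega]

/-- Prepending the letter `x`; it vanishes on words already containing `x`. -/
noncomputable def sepIns (x : X) (k : ℕ) : SepWords X R s k →ₗ[R] SepWords X R s (k + 1) :=
  Finsupp.lift _ R _ fun w => sepSingle (k + 1) (some x :: w.1) 1

theorem sepIns_single (x : X) (k : ℕ) (w : {w : List (Option X) // IsSepWord X s k w}) (r : R) :
    sepIns x k (Finsupp.single w r) = sepSingle (k + 1) (some x :: w.1) r := by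
  rw [sepIns, Finsupp.lift_apply, Finsupp.sum_single_index (by simp), smul_sepSingle, mul_one]

theorem sepIns_sepSingle (x : X) (k : ℕ) (w : List (Option X)) (r : R) :
    sepIns x k (sepSingle k w r : SepWords X R s k) = sepSingle (k + 1) (some x :: w) r := by
  by_cases h : IsSepWord X s k w
  · rw [sepSingle_of_isSepWord h, sepIns_single]
  · rw [sepSingle_of_not_isSepWord h, map_zero, sepSingle_of_not_isSepWord
      fun h' => h (isSepWord_cons_some_iff.mp h').1]

theorem sepBnd_sepIns_single {x : X} {k : ℕ} (w : {w : List (Option X) // IsSepWord X s k w})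
    (hx : some x ∉ w.1) (r : R) :
    sepBnd X R s k (sepIns x k (Finsupp.single w r)) = Finsupp.single w r -
      ∑ i ∈ Finset.range w.1.length, sepSingle k (some x :: w.1.eraseIdx i) ((-1) ^ i * r) := by
  rw [sepIns_single, sepSingle_of_isSepWord (isSepWord_cons_some_iff.mpr ⟨w.2, hx⟩),
    sepBnd_single, List.length_cons, Finset.sum_range_succ', List.eraseIdx_cons_zero,
    sepSingle_of_isSepWord w.2, pow_zero, one_mul, sub_eq_neg_add, ← Finset.sum_neg_distrib]
  congr 1
  refine Finset.sum_congr rfl fun i _ => ?_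
  rw [List.eraseIdx_cons_succ, ← sepSingle_neg, pow_succ]
  ring_nf

theorem sepIns_sepBnd_single (x : X) {k : ℕ}
    (w : {w : List (Option X) // IsSepWord X s (k + 1) w}) (r : R) :
    sepIns x k (sepBnd X R s k (Finsupp.single w r)) = ∑ i ∈ Finset.range w.1.length,
      sepSingle (k + 1) (some x :: w.1.eraseIdx i) ((-1) ^ i * r) := by
  simp only [sepBnd_single, map_sum, sepIns_sepSingle]

theorem sepBnd_sepIns_add_sepIns_sepBnd_single {x : X} {k : ℕ}
    (w : {w : List (Option X) // IsSepWord X s (k + 1) w}) (hx : some x ∉ w.1) (r : R) :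
    sepBnd X R s (k + 1) (sepIns x (k + 1) (Finsupp.single w r)) +
      sepIns x k (sepBnd X R s k (Finsupp.single w r)) = Finsupp.single w r := by
  rw [sepBnd_sepIns_single w hx, sepIns_sepBnd_single, sub_add_cancel]

theorem sepBnd_comp_sepIns_zero (x : X) :
    sepBnd X R s 0 ∘ₗ sepIns x 0 = LinearMap.id := by
  refine Finsupp.lhom_ext fun w r => ?_
  have hx : some x ∉ w.1 := fun hx => (w.2.pos_of_some_mem hx).false
  rw [LinearMap.comp_apply, sepBnd_sepIns_single w hx, LinearMap.id_apply, sub_eq_self]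
  exact Finset.sum_eq_zero fun i _ => sepSingle_of_not_isSepWord
    (fun h => (h.pos_of_some_mem List.mem_cons_self).false) _

/-- Homotopic to the identity, and carries every chain into chains of words containing `x`. -/
noncomputable def sepProj (x : X) (k : ℕ) :
    SepWords X R s (k + 1) →ₗ[R] SepWords X R s (k + 1) :=
  LinearMap.id - sepBnd X R s (k + 1) ∘ₗ sepIns x (k + 1) - sepIns x k ∘ₗ sepBnd X R s k

theorem sepProj_apply (x : X) (k : ℕ) (c : SepWords X R s (k + 1)) :
    sepProj x k c = c - sepBnd X R s (k + 1) (sepIns x (k + 1) c) - sepIns x k (sepBnd X R s k c) :=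
  rfl

theorem sub_sepProj_of_sepBnd_eq_zero (x : X) {k : ℕ} {c : SepWords X R s (k + 1)}
    (hc : sepBnd X R s k c = 0) :
    c - sepProj x k c = sepBnd X R s (k + 1) (sepIns x (k + 1) c) := by
  rw [sepProj_apply, hc, map_zero, sub_zero, sub_sub_cancel]

theorem sepBnd_sepProj_of_sepBnd_eq_zero (x : X) {k : ℕ} {c : SepWords X R s (k + 1)}
    (hc : sepBnd X R s k c = 0) : sepBnd X R s k (sepProj x k c) = 0 := by
  rw [← sub_sub_cancel c (sepProj x k c), sub_sepProj_of_sepBnd_eq_zero x hc, map_sub, hc,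
    zero_sub, ← LinearMap.comp_apply, sepBnd_comp_sepBnd, LinearMap.zero_apply, neg_zero]

theorem sepProj_single_of_some_not_mem {x : X} {k : ℕ}
    (w : {w : List (Option X) // IsSepWord X s (k + 1) w}) (hx : some x ∉ w.1) (r : R) :
    sepProj x k (Finsupp.single w r) = 0 := by
  rw [sepProj_apply, sub_sub, sepBnd_sepIns_add_sepIns_sepBnd_single w hx, sub_self]

theorem sepProj_single_of_some_mem {x : X} {k : ℕ}
    (w : {w : List (Option X) // IsSepWord X s (k + 1) w}) (hx : some x ∈ w.1) (r : R) :
    sepProj x k (Finsupp.single w r) = Finsupp.single w r - ∑ i ∈ Finset.range w.1.length,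
      sepSingle (k + 1) (some x :: w.1.eraseIdx i) ((-1) ^ i * r) := by
  rw [sepProj_apply, sepIns_single, sepSingle_of_not_isSepWord
    fun h => (isSepWord_cons_some_iff.mp h).2 hx, map_zero, sub_zero, sepIns_sepBnd_single]

theorem sepProj_single_mem_supported (x : X) {k : ℕ}
    (w : {w : List (Option X) // IsSepWord X s (k + 1) w}) :
    sepProj x k (Finsupp.single w (1 : R)) ∈
      Finsupp.supported R R {u | some x ∈ u.1 ∧ ∀ y, some y ∈ w.1 → some y ∈ u.1} := by
  by_cases hx : some x ∈ w.1
  · rw [sepProj_single_of_some_mem w hx]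
    refine sub_mem (Finsupp.single_mem_supported R _ ⟨hx, fun _ => id⟩) (sum_mem fun i hi =>
      sepSingle_mem_supported _ fun h => ⟨List.mem_cons_self, fun y hy => ?_⟩)
    have hi : i < w.1.length := Finset.mem_range.mp hi
    -- the word `some x :: w.eraseIdx i` exists only if position `i` of `w` carries `x`
    have hxi := List.getElem_eq_of_mem_of_not_mem_eraseIdx hi hx (isSepWord_cons_some_iff.mp h).2
    by_cases hy' : some y ∈ w.1.eraseIdx i
    · exact List.mem_cons_of_mem _ hy'
    · rw [← List.getElem_eq_of_mem_of_not_mem_eraseIdx hi hy hy', hxi]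
      exact List.mem_cons_self
  · rw [sepProj_single_of_some_not_mem w hx]
    exact zero_mem _

def containingChains (S : Finset X) (k : ℕ) : Submodule R (SepWords X R s k) :=
  Finsupp.supported R R {u | ∀ y ∈ S, some y ∈ u.1}

theorem sepProj_mem_containingChains (x : X) {S : Finset X} {k : ℕ} {c : SepWords X R s (k + 1)}
    (hc : c ∈ containingChains S (k + 1)) :
    sepProj x k c ∈ containingChains (insert x S) (k + 1) := by
  suffices containingChains S (k + 1) ≤
      (containingChains (insert x S) (k + 1)).comap (sepProj (R := R) (s := s) x k) from
    this hc
  rw [containingChains, Finsupp.supported_eq_span_single, Submodule.span_le]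
  rintro _ ⟨w, hw, rfl⟩
  refine Finsupp.supported_mono (fun u hu y hy => ?_) (sepProj_single_mem_supported x w)
  rcases Finset.mem_insert.mp hy with rfl | hy
  · exact hu.1
  · exact hu.2 y (hw y hy)

theorem exists_sepBnd_eq_zero_mem_containingChains (S : Finset X) {k : ℕ}
    {c : SepWords X R s (k + 1)} (hc : sepBnd X R s k c = 0) :
    ∃ c', sepBnd X R s k c' = 0 ∧ c' ∈ containingChains S (k + 1) ∧
      c - c' ∈ LinearMap.range (sepBnd X R s (k + 1)) := by
  induction S using Finset.induction_on with
  | empty => exact ⟨c, hc, fun _ _ y hy => absurd hy (Finset.notMem_empty y), by simp⟩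
  | insert x S _ ih =>
    obtain ⟨c', hc', hS, hcc'⟩ := ih
    refine ⟨sepProj x k c', sepBnd_sepProj_of_sepBnd_eq_zero x hc',
      sepProj_mem_containingChains x hS, ?_⟩
    rw [← sub_add_sub_cancel c c', sub_sepProj_of_sepBnd_eq_zero x hc']
    exact add_mem hcc' (LinearMap.mem_range_self _ _)

theorem containingChains_univ_eq_bot [Fintype X] {k : ℕ} (hk : k < Fintype.card X) :
    (containingChains Finset.univ k : Submodule R (SepWords X R s k)) = ⊥ := by
  rw [containingChains, ← Finsupp.supported_empty]
  refine congrArg _ (Set.eq_empty_of_forall_notMem fun u hu => hk.not_ge ?_)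
  calc Fintype.card X = (Finset.univ : Finset X).card := Finset.card_univ.symm
    _ ≤ (u.1.filterMap id).toFinset.card := Finset.card_le_card fun y _ =>
        List.mem_toFinset.mpr (List.mem_filterMap.mpr ⟨_, hu y (Finset.mem_univ y), rfl⟩)
    _ ≤ (u.1.filterMap id).length := List.toFinset_card_le _
    _ = k := u.2.length_filterMap

end

/-- The boundary operator of the complex of injective words with
`s` separators squares to zero, and the homology of the complex vanishes in all
degrees `i ≤ |X| - 2` (degree `i` corresponds to words with `i + 1` letters from
`X`; the condition at degree `-1` is surjectivity of the last boundary map). -/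
theorem injective_words_with_separators_highly_acyclic :
    (∀ k, (sepBnd X R s k).comp (sepBnd X R s (k + 1)) = 0) ∧
    (1 ≤ Fintype.card X → Function.Surjective (sepBnd X R s 0)) ∧
    (∀ k, k + 2 ≤ Fintype.card X →
      Function.Exact (sepBnd X R s (k + 1)) (sepBnd X R s k)) := by
  refine ⟨sepBnd_comp_sepBnd, fun hX => ?_, fun k hk c => ⟨fun hc => ?_, ?_⟩⟩
  · obtain ⟨x⟩ := Fintype.card_pos_iff.mp hX
    exact fun c => ⟨sepIns x 0 c, LinearMap.congr_fun (sepBnd_comp_sepIns_zero x) c⟩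
  · obtain ⟨c', -, hc', hcc'⟩ := exists_sepBnd_eq_zero_mem_containingChains Finset.univ hc
    rw [containingChains_univ_eq_bot (by omega), Submodule.mem_bot] at hc'
    rwa [hc', sub_zero] at hcc'
  · rintro ⟨d, rfl⟩
    exact LinearMap.congr_fun (sepBnd_comp_sepBnd k) d
end
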